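/- The matrix Q_0 with rows (12,8,−12), (12,0,0), (12,4,0) is admissible for rock-paper-scissors: for all k ≥ 1, the fictitious play iterate at time t = 1^T Q_0 (k², k, 1)^T = 36k²+12k−12 satisfies x_t = Q_0 (k², k, 1)^T. -/

import Mathlib

open Matrix

/-- The rock-paper-scissors payoff matrix. -/
def Arps : Matrix (Fin 3) (Fin 3) ℚ := !![0,-1,1; 1,0,-1; -1,1,0]

/-- Lexicographic argmax of a 3-vector: the smallest index attaining the maximum. -/
def lexArgmax (v : Fin 3 → ℚ) : Fin 3 :=
  if v 1 ≤ v 0 ∧ v 2 ≤ v 0 then 0 else if v 2 ≤ v 1 then 1 else 2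

/-- Fictitious play iterates for RPS with lexicographic tie-breaking, x_0 = 0. -/
def rpsX : ℕ → (Fin 3 → ℚ)
  | 0 => 0
  | t+1 => rpsX t + Pi.single (lexArgmax (Arps.mulVec (rpsX t))) 1

/-- The quadratic moment vector (k², k, 1). -/
def bvec (k : ℕ) : Fin 3 → ℚ := ![(k:ℚ)^2, (k:ℚ), 1]

def Q0 : Matrix (Fin 3) (Fin 3) ℚ := !![12,8,-12; 12,0,0; 12,4,0]

lemma Arps_mulVec (a b c : ℚ) : Arps.mulVec ![a,b,c] = ![-b+c, a-c, -a+b] := by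
  funext i
  fin_cases i <;>
    simp [Arps, Matrix.mulVec, dotProduct, Fin.sum_univ_three] <;> ring

lemma single0 : (Pi.single (0 : Fin 3) (1:ℚ)) = ![1,0,0] := by
  funext i; fin_cases i <;> simp
lemma single1 : (Pi.single (1 : Fin 3) (1:ℚ)) = ![0,1,0] := by
  funext i; fin_cases i <;> simp [Pi.single, Function.update]
lemma single2 : (Pi.single (2 : Fin 3) (1:ℚ)) = ![0,0,1] := by
  funext i; fin_cases i <;> simp [Pi.single, Function.update]

lemma lex0 (v : Fin 3 → ℚ) (h1 : v 1 ≤ v 0) (h2 : v 2 ≤ v 0) : lexArgmax v = 0 := by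
  simp [lexArgmax, h1, h2]

lemma lex1 (v : Fin 3 → ℚ) (h0 : v 0 < v 1) (h2 : v 2 ≤ v 1) : lexArgmax v = 1 := by
  rw [lexArgmax, if_neg (by push_neg; intro h; exact absurd h (not_le.2 h0)), if_pos h2]

lemma lex2 (v : Fin 3 → ℚ) (h0 : v 0 < v 2) (h1 : v 1 < v 2) : lexArgmax v = 2 := by
  rw [lexArgmax, if_neg (by push_neg; intro _; exact h0), if_neg (not_le.2 h1)]

lemma step0 (t : ℕ) (a b c : ℚ) (h : rpsX t = ![a,b,c])
    (h1 : a - c ≤ -b + c) (h2 : -a + b ≤ -b + c) :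
    rpsX (t+1) = ![a+1,b,c] := by
  show rpsX t + Pi.single (lexArgmax (Arps.mulVec (rpsX t))) 1 = _
  rw [h, Arps_mulVec, lex0 _ (by simpa using h1) (by simpa using h2), single0]
  funext i; fin_cases i <;> simp

lemma step1 (t : ℕ) (a b c : ℚ) (h : rpsX t = ![a,b,c])
    (h0 : -b + c < a - c) (h2 : -a + b ≤ a - c) :
    rpsX (t+1) = ![a,b+1,c] := by
  show rpsX t + Pi.single (lexArgmax (Arps.mulVec (rpsX t))) 1 = _
  rw [h, Arps_mulVec, lex1 _ (by simpa using h0) (by simpa using h2), single1]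
  funext i; fin_cases i <;> simp

lemma step2 (t : ℕ) (a b c : ℚ) (h : rpsX t = ![a,b,c])
    (h0 : -b + c < -a + b) (h1 : a - c < -a + b) :
    rpsX (t+1) = ![a,b,c+1] := by
  show rpsX t + Pi.single (lexArgmax (Arps.mulVec (rpsX t))) 1 = _
  rw [h, Arps_mulVec, lex2 _ (by simpa using h0) (by simpa using h1), single2]
  funext i; fin_cases i <;> simp

lemma run0 (n : ℕ) : ∀ (t : ℕ) (a b c : ℚ), rpsX t = ![a,b,c] →
    (a - c) + n ≤ (-b + c) + 1 → -a + b ≤ -b + c →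
    rpsX (t+n) = ![a+n,b,c] := by
  induction n with
  | zero => intro t a b c h _ _; simpa using h
  | succ n ih =>
    intro t a b c h h1 h2
    have hs : rpsX (t+1) = ![a+1,b,c] := by
      apply step0 t a b c h
      · have : (0:ℚ) ≤ n := Nat.cast_nonneg n
        push_cast at h1; linarith
      · exact h2
    have := ih (t+1) (a+1) b c hs (by push_cast at h1 ⊢; linarith)
      (by linarith)
    have ht : t + (n+1) = t + 1 + n := by omega
    rw [ht, this]
    funext i; fin_cases i <;> push_cast <;> (try simp) <;> ring_nf

lemma run1 (n : ℕ) : ∀ (t : ℕ) (a b c : ℚ), rpsX t = ![a,b,c] →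
    -b + c < a - c → (-a + b) + n ≤ (a - c) + 1 →
    rpsX (t+n) = ![a,b+n,c] := by
  induction n with
  | zero => intro t a b c h _ _; simpa using h
  | succ n ih =>
    intro t a b c h h0 h2
    have hs : rpsX (t+1) = ![a,b+1,c] := by
      apply step1 t a b c h h0
      have : (0:ℚ) ≤ n := Nat.cast_nonneg n
      push_cast at h2; linarith
    have := ih (t+1) a (b+1) c hs (by linarith) (by push_cast at h2 ⊢; linarith)
    have ht : t + (n+1) = t + 1 + n := by omega
    rw [ht, this]
    funext i; fin_cases i <;> push_cast <;> (try simp) <;> ring_nf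

lemma run2 (n : ℕ) : ∀ (t : ℕ) (a b c : ℚ), rpsX t = ![a,b,c] →
    (-b + c) + n < (-a + b) + 1 → a - c < -a + b →
    rpsX (t+n) = ![a,b,c+n] := by
  induction n with
  | zero => intro t a b c h _ _; simpa using h
  | succ n ih =>
    intro t a b c h h0 h1
    have hs : rpsX (t+1) = ![a,b,c+1] := by
      apply step2 t a b c h
      · have : (0:ℚ) ≤ n := Nat.cast_nonneg n
        push_cast at h0; linarith
      · exact h1
    have := ih (t+1) a b (c+1) hs (by push_cast at h0 ⊢; linarith) (by linarith)
    have ht : t + (n+1) = t + 1 + n := by omega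
    rw [ht, this]
    funext i; fin_cases i <;> push_cast <;> (try simp) <;> ring_nf

/-- One lap of the spiral. -/
lemma lap (k : ℕ) (hk : 1 ≤ k) (t : ℕ)
    (h : rpsX t = ![12*(k:ℚ)^2+8*k-12, 12*(k:ℚ)^2, 12*(k:ℚ)^2+4*k]) :
    rpsX (t + (72*k+48)) =
      ![12*((k:ℚ)+1)^2+8*((k:ℚ)+1)-12, 12*((k:ℚ)+1)^2, 12*((k:ℚ)+1)^2+4*((k:ℚ)+1)] := by
  have hk' : (1:ℚ) ≤ (k:ℚ) := by exact_mod_cast hk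
  set K : ℚ := (k:ℚ) with hK
  -- run of 13 zeros
  have h1 := run0 13 t _ _ _ h (by push_cast; ring_nf; linarith) (by linarith)
  -- run of 12k+3 ones
  have h2 := run1 (12*k+3) (t+13) _ _ _ h1 (by push_cast; linarith)
    (by push_cast; ring_nf; linarith)
  -- run of 12k+5 twos
  have h3 := run2 (12*k+5) (t+13+(12*k+3)) _ _ _ h2 (by push_cast; ring_nf; linarith)
    (by push_cast; linarith)
  -- run of 12k+7 zeros
  have h4 := run0 (12*k+7) _ _ _ _ h3 (by push_cast; ring_nf; linarith)
    (by push_cast; linarith)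
  -- run of 12k+9 ones
  have h5 := run1 (12*k+9) _ _ _ _ h4 (by push_cast; linarith)
    (by push_cast; ring_nf; linarith)
  -- run of 12k+11 twos
  have h6 := run2 (12*k+11) _ _ _ _ h5 (by push_cast; ring_nf; linarith)
    (by push_cast; linarith)
  -- run of 12k zeros
  have h7 := run0 (12*k) _ _ _ _ h6 (by push_cast; ring_nf; linarith)
    (by push_cast; linarith)
  have ht : t+13+(12*k+3)+(12*k+5)+(12*k+7)+(12*k+9)+(12*k+11)+12*k = t + (72*k+48) := by
    omega
  rw [ht] at h7
  rw [h7]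
  funext i; fin_cases i <;> push_cast <;> (try simp [← hK]) <;> ring

lemma base : rpsX 36 = ![8, 12, 16] := by
  have h0 : rpsX 0 = ![0,0,0] := by funext i; fin_cases i <;> simp [rpsX]
  have h1 := run0 1 0 0 0 0 h0 (by norm_num) (by norm_num)
  have h2 := run1 3 1 _ _ _ h1 (by norm_num) (by norm_num)
  have h3 := run2 5 4 _ _ _ h2 (by norm_num) (by norm_num)
  have h4 := run0 7 9 _ _ _ h3 (by norm_num) (by norm_num)
  have h5 := run1 9 16 _ _ _ h4 (by norm_num) (by norm_num)
  have h6 := run2 11 25 _ _ _ h5 (by norm_num) (by norm_num)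
  have : rpsX 36 = rpsX (25+11) := by norm_num
  rw [this, h6]
  funext i; fin_cases i <;> norm_num

lemma main_ind (k : ℕ) (hk : 1 ≤ k) :
    rpsX (36*k^2 + 12*k - 12) = ![12*(k:ℚ)^2+8*k-12, 12*(k:ℚ)^2, 12*(k:ℚ)^2+4*k] := by
  induction k, hk using Nat.le_induction with
  | base =>
    have : 36*1^2+12*1-12 = 36 := by norm_num
    rw [this, base]
    funext i; fin_cases i <;> norm_num
  | succ k hk ih =>
    have ht : 36*(k+1)^2 + 12*(k+1) - 12 = (36*k^2+12*k-12) + (72*k+48) := by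
      have : 12 ≤ 12*k := by omega
      ring_nf; omega
    rw [ht, lap k hk _ ih]
    funext i; fin_cases i <;> push_cast <;> ring_nf

/-- Q_0 is admissible for RPS: for all k ≥ 1, at time
t = 1ᵀ Q_0 (k²,k,1)ᵀ = 36k²+12k−12 the FP iterate satisfies x_t = Q_0 (k²,k,1)ᵀ. -/
theorem Q0_admissible (k : ℕ) (hk : 1 ≤ k) :
    ((36*k^2 + 12*k - 12 : ℚ) = ∑ i, Q0.mulVec (bvec k) i) ∧
    rpsX (36*k^2 + 12*k - 12) = Q0.mulVec (bvec k) := by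
  have hQ : Q0.mulVec (bvec k) = ![12*(k:ℚ)^2+8*k-12, 12*(k:ℚ)^2, 12*(k:ℚ)^2+4*k] := by
    funext i
    fin_cases i <;>
      simp [Q0, bvec, Matrix.mulVec, dotProduct, Fin.sum_univ_three] <;> ring
  constructor
  · rw [hQ, Fin.sum_univ_three]
    norm_num; simp; ring
  · rw [hQ]; exact main_ind k hk
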